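/- Let K be a field of characteristic zero, let G be a weakly Noetherian Lie algebra over K, and let I be a K-linear subspace of the centroid Cent(G) such that θ ∘ θ' = 0 for all θ, θ' ∈ I. Then I is finite-dimensional over K. -/

import Mathlib

/-- A Lie algebra is weakly Noetherian if `m/[m,m]` is finite dimensional over `K` for every
Lie subalgebra `m`. -/
def WeaklyNoetherian (K G : Type*) [Field K] [LieRing G] [LieAlgebra K G] : Prop :=
  ∀ m : LieSubalgebra K G,
    FiniteDimensional K (↥m ⧸ LieAlgebra.derivedSeries K ↥m 1)

/-!
For `θ` in the centroid, `θ(G)` is an ideal, and `⁅θ x, θ' y⁆ = θ' (θ ⁅x, y⁆)`; so when all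
products in `I` vanish, `V = ∑_{θ ∈ I} θ(G)` is an abelian ideal, finite dimensional because `G` is
weakly Noetherian. Its centralizer `m` then has finite codimension, hence so does `⁅m, m⁆`, again by
weak Noetherianity. Each `θ ∈ I` takes values in `V` and kills `⁅m, m⁆` (as
`θ ⁅a, b⁆ = ⁅a, θ b⁆ = 0`), so `I` embeds into the finite-dimensional space `Hom(G ⧸ ⁅m, m⁆, V)`.
-/

namespace Submodule

variable {R M : Type*} [Ring R] [AddCommGroup M] [Module R M]

theorem CoFG.of_cofg_comap_subtype {N P : Submodule R M} (hPN : P ≤ N) (hN : N.CoFG)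
    (hP : (P.comap N.subtype).CoFG) : P.CoFG := by
  refine Module.Finite.of_exact (f := mapQ _ P N.subtype le_rfl) (g := factor hPN) ?_
    (factor_surjective hPN)
  intro y
  obtain ⟨x, rfl⟩ := Quotient.mk_surjective _ y
  rw [← mkQ_apply, factor_mk, mkQ_apply, Quotient.mk_eq_zero]
  constructor
  · exact fun hx ↦ ⟨Quotient.mk ⟨x, hx⟩, rfl⟩
  · rintro ⟨z, hz⟩
    obtain ⟨n, rfl⟩ := Quotient.mk_surjective _ z
    rw [mapQ_apply, mkQ_apply, Quotient.eq] at hz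
    simpa using N.sub_mem n.2 (hPN hz)

end Submodule

theorem Submodule.finite_of_forall_le_ker_of_forall_range_le {K M N : Type*} [Field K]
    [AddCommGroup M] [Module K M] [AddCommGroup N] [Module K N]
    {S : Submodule K (M →ₗ[K] N)} {D : Submodule K M} {V : Submodule K N}
    (hD : D.CoFG) [Module.Finite K V]
    (hker : ∀ f ∈ S, D ≤ LinearMap.ker f) (hrange : ∀ f ∈ S, LinearMap.range f ≤ V) :
    Module.Finite K S := by
  let Φ : S →ₗ[K] M ⧸ D →ₗ[K] V :=
    { toFun f := D.liftQ ((f : M →ₗ[K] N).codRestrict V fun x ↦ hrange f f.2 ⟨x, rfl⟩)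
        (by rw [LinearMap.ker_codRestrict]; exact hker f f.2)
      map_add' _ _ := by ext; rfl
      map_smul' _ _ := by ext; rfl }
  refine Module.Finite.of_injective Φ fun f g hfg ↦ Subtype.ext (LinearMap.ext fun x ↦ ?_)
  exact congr_arg Subtype.val (LinearMap.congr_fun hfg (D.mkQ x))

namespace LieSubmodule

variable {R L M : Type*} [CommRing R] [LieRing L] [LieAlgebra R L]
  [AddCommGroup M] [Module R M] [LieRingModule L M] [LieModule R L M]

theorem lie_eq_bot_iff_le_ker (I : LieIdeal R L) (N : LieSubmodule R L M) :
    ⁅I, N⁆ = ⊥ ↔ I ≤ LieModule.ker R L N := by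
  simp [lie_eq_bot_iff, SetLike.le_def, LieModule.mem_ker, Subtype.ext_iff]

theorem iSup_lie_eq_bot_iff {ι : Type*} (I : ι → LieIdeal R L) (N : LieSubmodule R L M) :
    ⁅⨆ i, I i, N⁆ = ⊥ ↔ ∀ i, ⁅I i, N⁆ = ⊥ := by
  simp only [lie_eq_bot_iff_le_ker, iSup_le_iff]

end LieSubmodule

section

attribute [local instance] LieRing.ofAssociativeRing

theorem LieModule.cofg_ker (K L M : Type*) [Field K] [LieRing L] [LieAlgebra K L]
    [AddCommGroup M] [Module K M] [LieRingModule L M] [LieModule K L M] [FiniteDimensional K M] :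
    (LieModule.ker K L M).toSubmodule.CoFG := by
  rw [LieModule.ker, LieHom.ker_toSubmodule]
  exact Submodule.CoFG.ker _

end

namespace LieAlgebra

variable (K G : Type*) [CommRing K] [LieRing G] [LieAlgebra K G]

def centroid : Submodule K (G →ₗ[K] G) where
  carrier := {θ | ∀ x y : G, θ ⁅x, y⁆ = ⁅x, θ y⁆}
  add_mem' hθ hη x y := by simp [hθ x y, hη x y]
  zero_mem' := by simp
  smul_mem' c θ hθ x y := by simp [hθ x y]

namespace centroid

variable {K G} {θ θ' : G →ₗ[K] G}

theorem map_lie_left (hθ : θ ∈ centroid K G) (x y : G) : θ ⁅x, y⁆ = ⁅x, θ y⁆ :=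
  hθ x y

theorem map_lie_right (hθ : θ ∈ centroid K G) (x y : G) : θ ⁅x, y⁆ = ⁅θ x, y⁆ := by
  rw [← lie_skew, map_neg, map_lie_left hθ, lie_skew]

def rangeIdeal (hθ : θ ∈ centroid K G) : LieIdeal K G where
  __ := LinearMap.range θ
  lie_mem := by
    rintro x _ ⟨y, rfl⟩
    exact ⟨⁅x, y⁆, map_lie_left hθ x y⟩

theorem lie_rangeIdeal_eq_bot (hθ : θ ∈ centroid K G) (hθ' : θ' ∈ centroid K G)
    (h : θ' ∘ₗ θ = 0) : ⁅rangeIdeal hθ, rangeIdeal hθ'⁆ = ⊥ := by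
  rw [LieSubmodule.lie_eq_bot_iff]
  rintro _ ⟨x, rfl⟩ _ ⟨y, rfl⟩
  rw [← map_lie_left hθ', ← map_lie_right hθ, ← LinearMap.comp_apply, h, LinearMap.zero_apply]

variable {I : Submodule K (G →ₗ[K] G)}

def imageIdeal (hI : I ≤ centroid K G) : LieIdeal K G :=
  ⨆ θ : I, rangeIdeal (hI θ.2)

theorem range_le_imageIdeal (hI : I ≤ centroid K G) (hθ : θ ∈ I) :
    LinearMap.range θ ≤ (imageIdeal hI).toSubmodule := by
  rintro _ ⟨x, rfl⟩
  exact LieSubmodule.mem_iSup_of_mem (⟨θ, hθ⟩ : I) ⟨x, rfl⟩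

theorem isLieAbelian_imageIdeal (hI : I ≤ centroid K G)
    (hsq : ∀ θ ∈ I, ∀ θ' ∈ I, θ ∘ₗ θ' = 0) : IsLieAbelian (imageIdeal hI) := by
  rw [LieSubmodule.lie_abelian_iff_lie_self_eq_bot, imageIdeal,
    LieSubmodule.iSup_lie_eq_bot_iff]
  intro θ
  rw [LieSubmodule.lie_comm, LieSubmodule.iSup_lie_eq_bot_iff]
  intro θ'
  exact lie_rangeIdeal_eq_bot _ _ (hsq θ θ.2 θ' θ'.2)

theorem lie_ker_le_ker_of_range_le (hθ : θ ∈ centroid K G) {V : LieIdeal K G}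
    (hV : LinearMap.range θ ≤ V.toSubmodule) (J : LieIdeal K G) :
    (⁅LieModule.ker K G V, J⁆ : LieIdeal K G).toSubmodule ≤ LinearMap.ker θ := by
  rw [LieSubmodule.lieIdeal_oper_eq_linear_span', Submodule.span_le]
  rintro _ ⟨x, hx, y, -, rfl⟩
  have := (LieModule.mem_ker K G V x).mp hx ⟨θ y, hV ⟨y, rfl⟩⟩
  simpa [map_lie_left hθ, Subtype.ext_iff] using this

end centroid

end LieAlgebra

namespace WeaklyNoetherian

variable {K G : Type*} [Field K] [LieRing G] [LieAlgebra K G]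

theorem finiteDimensional_of_isLieAbelian (hG : WeaklyNoetherian K G) (m : LieSubalgebra K G)
    [IsLieAbelian m] : FiniteDimensional K m := by
  have hm := hG m
  rw [LieAlgebra.derivedSeries_def, LieAlgebra.derivedSeriesOfIdeal_succ,
    LieAlgebra.derivedSeriesOfIdeal_zero, LieSubmodule.trivial_lie_oper_zero] at hm
  exact (Module.Finite.iff_cofg_bot K m).mp hm

theorem cofg_lie_self (hG : WeaklyNoetherian K G) {J : LieIdeal K G}
    (hJ : J.toSubmodule.CoFG) : (⁅J, J⁆ : LieIdeal K G).toSubmodule.CoFG := by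
  refine hJ.of_cofg_comap_subtype (LieSubmodule.lie_le_left J J) ?_
  have hm : FiniteDimensional K (J ⧸ LieAlgebra.derivedSeries K J 1) := hG J
  rwa [LieIdeal.derivedSeries_eq_derivedSeriesOfIdeal_comap,
    LieAlgebra.derivedSeriesOfIdeal_succ, LieAlgebra.derivedSeriesOfIdeal_zero] at hm

end WeaklyNoetherian

theorem weaklyNoetherian_square_zero_subspace_of_centroid_finiteDimensional_general
    (K G : Type*) [Field K] [LieRing G] [LieAlgebra K G]
    (hG : WeaklyNoetherian K G)
    (I : Submodule K (G →ₗ[K] G))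
    (hcent : ∀ θ ∈ I, ∀ x y : G, θ ⁅x, y⁆ = ⁅x, θ y⁆)
    (hsq : ∀ θ ∈ I, ∀ θ' ∈ I, θ ∘ₗ θ' = 0) :
    FiniteDimensional K I := by
  have hI : I ≤ LieAlgebra.centroid K G := hcent
  set V := LieAlgebra.centroid.imageIdeal hI
  have : IsLieAbelian (V : LieSubalgebra K G) :=
    LieAlgebra.centroid.isLieAbelian_imageIdeal hI hsq
  have : FiniteDimensional K V := hG.finiteDimensional_of_isLieAbelian V
  have hD := hG.cofg_lie_self (LieModule.cofg_ker K G V)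
  have hrange := fun θ (hθ : θ ∈ I) ↦ LieAlgebra.centroid.range_le_imageIdeal hI hθ
  exact Submodule.finite_of_forall_le_ker_of_forall_range_le hD
    (fun θ hθ ↦ LieAlgebra.centroid.lie_ker_le_ker_of_range_le (hI hθ) (hrange θ hθ) _) hrange

/-- Let `G` be a weakly Noetherian Lie algebra and let `I` be a `K`-linear
subspace of the centroid of `G` (the space of linear endomorphisms `θ` with
`θ ⁅x, y⁆ = ⁅x, θ y⁆`) such that `θ ∘ θ' = 0` for all `θ, θ' ∈ I`. Then `I` is finite
dimensional. -/
theorem weaklyNoetherian_square_zero_subspace_of_centroid_finiteDimensional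
    (K G : Type*) [Field K] [CharZero K] [LieRing G] [LieAlgebra K G]
    (hG : WeaklyNoetherian K G)
    (I : Submodule K (G →ₗ[K] G))
    (hcent : ∀ θ ∈ I, ∀ x y : G, θ ⁅x, y⁆ = ⁅x, θ y⁆)
    (hsq : ∀ θ ∈ I, ∀ θ' ∈ I, θ ∘ₗ θ' = 0) :
    FiniteDimensional K I :=
  weaklyNoetherian_square_zero_subspace_of_centroid_finiteDimensional_general K G hG I hcent hsq
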